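/- Let n ∈ ℕ, p ∈ [0,1]^n, and let f : {0,1}^n → ℝ be monotone and 1-Lipschitz. Define F(λ) = ∫ e^{λ f(x)} dμ_{e^{-λ}p}(x) and φ(x) = e^x − x − 1. Then for every λ ∈ (0,1], the derivative of F at λ satisfies F'(λ) ≤ ∫ f(x) e^{λ f(x)} dμ_{e^{-λ}p}(x) − (1/λ) · Σ_{i=1}^{n} ∫ e^{λ f(x)} · φ( −λ ( f(x) − f(x_{i←0}) ) ) dμ_{e^{-λ}p}(x). -/

import Mathlib

open MeasureTheory

/-- The Bernoulli measure on `Bool` with parameter `q`. -/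
noncomputable def bernoulliMeasure (q : ℝ) : Measure Bool :=
  (ENNReal.ofReal q) • Measure.dirac true + (ENNReal.ofReal (1 - q)) • Measure.dirac false

/-- The product Bernoulli measure `μ_p` on `{0,1}^n`. -/
noncomputable def productBernoulli {n : ℕ} (p : Fin n → ℝ) : Measure (Fin n → Bool) :=
  Measure.pi fun i => bernoulliMeasure (p i)

/-- `f` is 1-Lipschitz with respect to the Hamming distance on `{0,1}^n`. -/
def OneLipschitz {n : ℕ} (f : (Fin n → Bool) → ℝ) : Prop :=
  ∀ x y : Fin n → Bool,
    |f x - f y| ≤ (Finset.univ.filter fun i => x i ≠ y i).card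

/-- `φ(x) = eˣ − x − 1`. -/
noncomputable def phi (x : ℝ) : ℝ := Real.exp x - x - 1

/-!
The weight of `x` under `μ_{e^{-s}p}` is `∏ᵢ wᵢ(s, xᵢ)` with `wᵢ(s, 1) = e^{-s}pᵢ` and
`wᵢ(s, 0) = 1 - e^{-s}pᵢ`. Differentiating in `s` and pairing `x` with `x_{i←0}` gives the
generator of the thinning semigroup, `d/ds E[g] = Σᵢ E[g(x_{i←0}) - g(x)]`, so
`F'(λ) = E[f e^{λf}] + Σᵢ E[e^{λ f(x_{i←0})} - e^{λ f(x)}]`. Each summand is then bounded pointwise: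
by monotonicity and the Lipschitz bound `u = λ(f(x) - f(x_{i←0})) ∈ [0, λ]`, and
`φ(-u) ≤ u(1 - e^{-u}) ≤ λ(1 - e^{-u})` since `(1 + u)e^{-u} ≤ 1`.
-/

open Finset Function Real

noncomputable def bernoulliWeight (q : ℝ) (b : Bool) : ℝ := if b then q else 1 - q

noncomputable def productWeight {ι : Type*} [Fintype ι] (q : ι → ℝ) (x : ι → Bool) : ℝ :=
  ∏ i, bernoulliWeight (q i) (x i)

lemma bernoulliWeight_nonneg {q : ℝ} (hq : q ∈ Set.Icc (0 : ℝ) 1) (b : Bool) :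
    0 ≤ bernoulliWeight q b := by
  cases b
  · exact sub_nonneg.2 hq.2
  · exact hq.1

lemma productWeight_nonneg {ι : Type*} [Fintype ι] {q : ι → ℝ}
    (hq : ∀ i, q i ∈ Set.Icc (0 : ℝ) 1) (x : ι → Bool) : 0 ≤ productWeight q x :=
  prod_nonneg fun i _ => bernoulliWeight_nonneg (hq i) (x i)

lemma bernoulliMeasure_singleton (q : ℝ) (b : Bool) :
    bernoulliMeasure q {b} = ENNReal.ofReal (bernoulliWeight q b) := by
  cases b <;> simp [bernoulliMeasure, bernoulliWeight]

lemma isProbabilityMeasure_bernoulliMeasure {q : ℝ} (hq : q ∈ Set.Icc (0 : ℝ) 1) :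
    IsProbabilityMeasure (bernoulliMeasure q) := by
  constructor
  simp [bernoulliMeasure, ← ENNReal.ofReal_add hq.1 (sub_nonneg.2 hq.2)]

lemma integral_productBernoulli {n : ℕ} {q : Fin n → ℝ} (hq : ∀ i, q i ∈ Set.Icc (0 : ℝ) 1)
    (g : (Fin n → Bool) → ℝ) :
    ∫ x, g x ∂productBernoulli q = ∑ x, productWeight q x * g x := by
  have := fun i => isProbabilityMeasure_bernoulliMeasure (hq i)
  have : IsProbabilityMeasure (productBernoulli q) := by
    unfold productBernoulli; infer_instance
  rw [integral_fintype .of_finite]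
  refine sum_congr rfl fun x _ => ?_
  simp only [smul_eq_mul, Measure.real, productBernoulli, Measure.pi_singleton,
    ENNReal.toReal_prod, bernoulliMeasure_singleton,
    ENNReal.toReal_ofReal (bernoulliWeight_nonneg (hq _) _), productWeight]

section Thinning

variable {ι : Type*} [Fintype ι] [DecidableEq ι]

lemma sum_ite_update_false {M : Type*} [AddCommMonoid M] (i : ι) (H : (ι → Bool) → M) :
    ∑ x, (if x i then H (update x i false) else 0) = ∑ x, if x i then 0 else H x := by
  refine Fintype.sum_equiv (Involutive.toPerm (fun x => update x i (!x i)) fun x => by simp)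
    _ _ fun x => ?_
  dsimp only [Involutive.toPerm, Equiv.coe_fn_mk]
  cases x i <;> simp

lemma prod_erase_bernoulliWeight_update (q : ι → ℝ) (x : ι → Bool) (i : ι) (b : Bool) :
    ∏ j ∈ univ.erase i, bernoulliWeight (q j) (update x i b j) =
      ∏ j ∈ univ.erase i, bernoulliWeight (q j) (x j) :=
  prod_congr rfl fun j hj => by rw [update_of_ne (ne_of_mem_erase hj)]

lemma productWeight_eq_mul_prod_erase (q : ι → ℝ) (x : ι → Bool) (i : ι) :
    productWeight q x =
      bernoulliWeight (q i) (x i) * ∏ j ∈ univ.erase i, bernoulliWeight (q j) (x j) :=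
  (mul_prod_erase _ _ (mem_univ i)).symm

lemma sum_prod_erase_mul_eq_sum_productWeight_mul (q : ι → ℝ) (g : (ι → Bool) → ℝ) (i : ι) :
    ∑ x, (∏ j ∈ univ.erase i, bernoulliWeight (q j) (x j)) * (if x i then -q i else q i) * g x =
      ∑ x, productWeight q x * (g (update x i false) - g x) := by
  set P : (ι → Bool) → ℝ := fun x => ∏ j ∈ univ.erase i, bernoulliWeight (q j) (x j)
  have hP (x : ι → Bool) : P (update x i false) = P x :=
    prod_erase_bernoulliWeight_update q x i false
  have hpair := sum_ite_update_false i fun x => q i * P x * g x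
  simp only [hP] at hpair
  calc _ = ∑ x, (if x i then 0 else q i * P x * g x) -
          ∑ x, (if x i then q i * P x * g x else 0) := by
        rw [← sum_sub_distrib]
        refine sum_congr rfl fun x _ => ?_
        cases x i <;> simp only [Bool.false_eq_true, if_true, if_false] <;> ring
    _ = ∑ x, (if x i then q i * P x * g (update x i false) else 0) -
          ∑ x, (if x i then q i * P x * g x else 0) := by rw [hpair]
    _ = _ := by
        rw [← sum_sub_distrib]
        refine sum_congr rfl fun x _ => ?_
        rw [productWeight_eq_mul_prod_erase q x i]
        cases hx : x i
        · simp [← hx]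
        · simp only [↓reduceIte, bernoulliWeight, P]
          ring

lemma hasDerivAt_bernoulliWeight_exp_neg_mul (c : ℝ) (b : Bool) (l : ℝ) :
    HasDerivAt (fun s => bernoulliWeight (exp (-s) * c) b)
      (if b then -(exp (-l) * c) else exp (-l) * c) l := by
  have hq : HasDerivAt (fun s => exp (-s) * c) (-(exp (-l) * c)) l := by
    simpa using ((hasDerivAt_neg l).exp).mul_const c
  cases b
  · simpa [bernoulliWeight] using hq.const_sub 1
  · simpa [bernoulliWeight] using hq

lemma hasDerivAt_productWeight_exp_neg_mul (p : ι → ℝ) (x : ι → Bool) (l : ℝ) :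
    HasDerivAt (fun s => productWeight (fun i => exp (-s) * p i) x)
      (∑ i, (∏ j ∈ univ.erase i, bernoulliWeight (exp (-l) * p j) (x j)) *
        (if x i then -(exp (-l) * p i) else exp (-l) * p i)) l :=
  HasDerivAt.fun_finsetProd fun i _ => hasDerivAt_bernoulliWeight_exp_neg_mul (p i) (x i) l

lemma hasDerivAt_sum_productWeight_exp_neg_mul (p : ι → ℝ) {g : ℝ → (ι → Bool) → ℝ}
    {g' : (ι → Bool) → ℝ} {l : ℝ} (hg : ∀ x, HasDerivAt (g · x) (g' x) l) :
    HasDerivAt (fun s => ∑ x, productWeight (fun i => exp (-s) * p i) x * g s x)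
      (∑ x, productWeight (fun i => exp (-l) * p i) x * g' x + ∑ i, ∑ x,
        productWeight (fun i => exp (-l) * p i) x * (g l (update x i false) - g l x)) l := by
  refine (HasDerivAt.fun_sum fun x _ =>
    (hasDerivAt_productWeight_exp_neg_mul p x l).mul (hg x)).congr_deriv ?_
  rw [sum_add_distrib, add_comm]
  congr 1
  simp_rw [sum_mul]
  rw [sum_comm]
  exact sum_congr rfl fun i _ => sum_prod_erase_mul_eq_sum_productWeight_mul _ (g l) i

end Thinning

lemma phi_neg_le_mul_one_sub_exp_neg {u l : ℝ} (hu : 0 ≤ u) (hul : u ≤ l) :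
    phi (-u) ≤ l * (1 - exp (-u)) := by
  have h_exp : exp (-u) * (1 + u) ≤ 1 := by
    calc exp (-u) * (1 + u) ≤ exp (-u) * exp u := by
          gcongr; linarith [add_one_le_exp u]
      _ = 1 := by rw [← exp_add, neg_add_cancel, exp_zero]
  have h_gap : 0 ≤ 1 - exp (-u) := sub_nonneg.2 (exp_le_one_iff.2 (neg_nonpos.2 hu))
  calc phi (-u) ≤ u * (1 - exp (-u)) := by unfold phi; nlinarith
    _ ≤ l * (1 - exp (-u)) := mul_le_mul_of_nonneg_right hul h_gap

lemma exp_mul_sub_exp_mul_le {l a b : ℝ} (hl : 0 < l) (hab : a ≤ b) (hba : b - a ≤ 1) :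
    exp (l * a) - exp (l * b) ≤ -(1 / l) * (exp (l * b) * phi (-(l * (b - a)))) := by
  have hphi := phi_neg_le_mul_one_sub_exp_neg (mul_nonneg hl.le (sub_nonneg.2 hab))
    (mul_le_of_le_one_right hl.le hba)
  calc exp (l * a) - exp (l * b)
        = -(1 / l) * (exp (l * b) * (l * (1 - exp (-(l * (b - a)))))) := by
          have hsplit : exp (l * a) = exp (l * b) * exp (-(l * (b - a))) := by
            rw [← exp_add]; ring_nf
          field_simp
          rw [hsplit]
          ring
    _ ≤ _ := mul_le_mul_of_nonpos_left (mul_le_mul_of_nonneg_left hphi (exp_pos _).le)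
          (neg_nonpos.2 (one_div_pos.2 hl).le)

lemma OneLipschitz.sub_update_le_one {n : ℕ} {f : (Fin n → Bool) → ℝ} (hf : OneLipschitz f)
    (x : Fin n → Bool) (i : Fin n) (b : Bool) : f x - f (update x i b) ≤ 1 := by
  have h_eq_i (j : Fin n) (hj : x j ≠ update x i b j) : j = i :=
    by_contra fun hji => hj (update_of_ne hji b x).symm
  have hcard : (univ.filter fun j => x j ≠ update x i b j).card ≤ 1 :=
    card_le_one.2 fun j hj k hk =>
      (h_eq_i j (mem_filter.1 hj).2).trans (h_eq_i k (mem_filter.1 hk).2).symm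
  exact (le_abs_self _).trans ((hf _ _).trans (by exact_mod_cast hcard))

/-- Upper bound on the derivative of `F(λ) = ∫ e^{λ f} dμ_{e^{-λ}p}` for monotone
1-Lipschitz `f` and `λ ∈ (0,1]`:
`F'(λ) ≤ E[Z^{(λ)} e^{λ Z^{(λ)}}] − (1/λ) Σᵢ E[e^{λ Z^{(λ)}} φ(−λ(Z^{(λ)} − Zᵢ^{(λ)}))]`. -/
theorem deriv_upper_bound {n : ℕ} (p : Fin n → ℝ)
    (hp : ∀ i, p i ∈ Set.Icc (0 : ℝ) 1)
    (f : (Fin n → Bool) → ℝ) (hf_mono : Monotone f) (hf_lip : OneLipschitz f)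
    (F : ℝ → ℝ)
    (hF : F = fun l =>
      ∫ x, Real.exp (l * f x) ∂(productBernoulli (fun i => Real.exp (-l) * p i)))
    (l : ℝ) (hl : l ∈ Set.Ioc (0 : ℝ) 1) :
    deriv F l ≤
      (∫ x, f x * Real.exp (l * f x)
          ∂(productBernoulli (fun i => Real.exp (-l) * p i))) -
        (1 / l) *
          ∑ i : Fin n,
            ∫ x, Real.exp (l * f x) * phi (-(l * (f x - f (Function.update x i false))))
              ∂(productBernoulli (fun i => Real.exp (-l) * p i)) := by
  have hq (s : ℝ) (hs : 0 < s) (i : Fin n) : exp (-s) * p i ∈ Set.Icc (0 : ℝ) 1 :=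
    ⟨mul_nonneg (exp_pos _).le (hp i).1,
      mul_le_one₀ (exp_le_one_iff.2 (neg_nonpos.2 hs.le)) (hp i).1 (hp i).2⟩
  have hF_eq : F =ᶠ[nhds l]
      fun s => ∑ x, productWeight (fun i => exp (-s) * p i) x * exp (s * f x) :=
    Filter.eventually_of_mem (Ioi_mem_nhds hl.1) fun s hs => by
      rw [hF]; exact integral_productBernoulli (hq s hs) _
  have h_exp (x : Fin n → Bool) : HasDerivAt (fun s => exp (s * f x)) (f x * exp (l * f x)) l := by
    simpa [mul_comm] using ((hasDerivAt_id l).mul_const (f x)).exp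
  rw [hF_eq.deriv_eq, (hasDerivAt_sum_productWeight_exp_neg_mul p h_exp).deriv]
  simp only [integral_productBernoulli (hq l hl.1)]
  rw [sub_eq_add_neg]
  simp_rw [mul_sum, ← sum_neg_distrib]
  gcongr with i _ x _
  have h_drop : f (update x i false) ≤ f x :=
    hf_mono (update_le_iff.2 ⟨Bool.false_le _, fun _ _ => le_rfl⟩)
  exact (mul_le_mul_of_nonneg_left
    (exp_mul_sub_exp_mul_le hl.1 h_drop (hf_lip.sub_update_le_one x i false))
    (productWeight_nonneg (hq l hl.1) x)).trans_eq (by ring)
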